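/- Given any upward closed Σ^0_2 set U of finite binary strings, there exists an infinitary self-delimiting machine M which never prints anything on its output tape such that for every string σ: (i) if σ ∈ U then there is n ≥ |σ| such that every extension of σ of length n lies in DOM(M^∞); and (ii) if σ ∈ DOM(M^∞) then σ ∈ U. Consequently ⟦DOM(M^∞)⟧ = ⟦U⟧ and INF(M^∞) is empty. -/

import Mathlib

open scoped Classical
open MeasureTheory

namespace RandProb

/-- Cantor space: the space of infinite binary sequences. -/
abbrev Cantor := ℕ → Bool

/-! ### Oracle partial recursive functions, via codes -/

/-- Codes for partial recursive functions with access to an oracle `O : ℕ → ℕ`.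
These codes play the role of (oracle) Turing machines. -/
inductive CodeO : Type
  | zero : CodeO
  | succ : CodeO
  | left : CodeO
  | right : CodeO
  | oracle : CodeO
  | pair : CodeO → CodeO → CodeO
  | comp : CodeO → CodeO → CodeO
  | prec : CodeO → CodeO → CodeO
  | rfind' : CodeO → CodeO

/-- Evaluation of an oracle code with (total) oracle `O`. -/
def CodeO.eval (O : ℕ → ℕ) : CodeO → ℕ →. ℕ
  | .zero => pure 0
  | .succ => Nat.succ
  | .left => ↑fun n : ℕ => n.unpair.1
  | .right => ↑fun n : ℕ => n.unpair.2
  | .oracle => ↑fun n : ℕ => O n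
  | .pair cf cg => fun n => Nat.pair <$> cf.eval O n <*> cg.eval O n
  | .comp cf cg => fun n => cg.eval O n >>= cf.eval O
  | .prec cf cg =>
    Nat.unpaired fun a n =>
      n.rec (cf.eval O a) fun y IH => do
        let i ← IH
        cg.eval O (Nat.pair a (Nat.pair y i))
  | .rfind' cf =>
    Nat.unpaired fun a m =>
      (Nat.rfind fun n => (fun m => m = 0) <$> cf.eval O (Nat.pair a (n + m))).map (· + m)

/-- A canonical injective numbering of oracle codes. -/
def CodeO.encode : CodeO → ℕ
  | .zero => 0
  | .succ => 1
  | .left => 2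
  | .right => 3
  | .oracle => 4
  | .pair cf cg => 2 * (2 * Nat.pair cf.encode cg.encode) + 5
  | .comp cf cg => 2 * (2 * Nat.pair cf.encode cg.encode + 1) + 5
  | .prec cf cg => 2 * (2 * Nat.pair cf.encode cg.encode) + 6
  | .rfind' cf => 2 * (2 * cf.encode + 1) + 6

/-- The Turing jump of an oracle: the halting problem relative to `O`,
as a `{0,1}`-valued function. -/
noncomputable def jump (O : ℕ → ℕ) : ℕ → ℕ := fun e =>
  if ∃ c : CodeO, c.encode = e ∧ (c.eval O e).Dom then 1 else 0

/-- `iterJump n` is `∅^(n)`, the `n`-th iterate of the halting problem (as an oracle). -/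
noncomputable def iterJump : ℕ → ℕ → ℕ
  | 0 => fun _ => 0
  | n + 1 => jump (iterJump n)

/-- `S ⊆ ℕ` is computably enumerable relative to the oracle `O`. -/
def CeIn (O : ℕ → ℕ) (S : Set ℕ) : Prop := ∃ c : CodeO, S = {m | (c.eval O m).Dom}

/-- The left Dedekind cut of `α` (as a set of codes of rationals) is c.e. in `O`. -/
def LeftCeIn (O : ℕ → ℕ) (α : ℝ) : Prop :=
  CeIn O {m | ∃ q : ℚ, Encodable.encode q = m ∧ (q : ℝ) < α}

/-- The right Dedekind cut of `α` (as a set of codes of rationals) is c.e. in `O`. -/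
def RightCeIn (O : ℕ → ℕ) (α : ℝ) : Prop :=
  CeIn O {m | ∃ q : ℚ, Encodable.encode q = m ∧ α < (q : ℝ)}

/-! ### Martin-Löf randomness for real numbers -/

/-- The `i`-th component of a Martin-Löf test coded by the set `W ⊆ ℕ`:
the union of all open rational intervals whose codes are enumerated into the
`i`-th section of `W`. -/
def testSet (W : Set ℕ) (i : ℕ) : Set ℝ :=
  {x | ∃ p q : ℚ, Nat.pair i (Encodable.encode (p, q)) ∈ W ∧ (p : ℝ) < x ∧ x < (q : ℝ)}

/-- `α` is Martin-Löf random relative to the oracle `O`. -/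
def MLRandomIn (O : ℕ → ℕ) (α : ℝ) : Prop :=
  ∀ W : Set ℕ, CeIn O W →
    (∀ i, volume (testSet W i) ≤ ENNReal.ofReal ((2 : ℝ)⁻¹ ^ i)) →
    ∃ i, α ∉ testSet W i

/-- `α` is `n`-random: Martin-Löf random relative to `∅^(n-1)`. -/
def NRandom (n : ℕ) (α : ℝ) : Prop := MLRandomIn (iterJump (n - 1)) α

/-! ### The uniform measure on Cantor space -/

/-- The binary digits of a real number (meaningful on `[0,1)`). -/
noncomputable def digits (x : ℝ) : Cantor := fun n => decide (⌊x * 2 ^ (n + 1)⌋ % 2 = 1)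

/-- The uniform (Lebesgue) product measure on Cantor space, obtained as the
pushforward of Lebesgue measure on `[0,1)` under the binary-digit map. -/
noncomputable def mu : Measure Cantor :=
  Measure.map digits (volume.restrict (Set.Ico (0 : ℝ) 1))

/-- The uniform measure of a set of elements of Cantor space, as a real number. -/
noncomputable def muR (S : Set Cantor) : ℝ := (mu S).toReal

/-! ### Strings, prefixes and cylinders -/

/-- The length-`n` initial segment of `X ∈ 2^ω`, as a finite binary string. -/
def initSeg (X : Cantor) (n : ℕ) : List Bool := (List.range n).map X

/-- `⟦S⟧`: the elements of Cantor space having a prefix in the set of strings `S`. -/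
def cyl (S : Set (List Bool)) : Set Cantor := {X | ∃ n, initSeg X n ∈ S}

/-- A set of strings is prefix-free if none of its elements properly extends another. -/
def IsPrefixFree (S : Set (List Bool)) : Prop := ∀ σ ∈ S, ∀ τ ∈ S, σ <+: τ → σ = τ

/-- A set of strings is upward closed if it is closed under taking extensions. -/
def UpClosed (S : Set (List Bool)) : Prop := ∀ σ ∈ S, ∀ τ, σ <+: τ → τ ∈ S

/-- Two strings are compatible if one is a prefix of the other. -/
def Compatible (σ τ : List Bool) : Prop := σ <+: τ ∨ τ <+: σ

/-! ### Oracle machines -/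

/-- An element of Cantor space viewed as a `{0,1}`-valued oracle. -/
def oX (X : Cantor) : ℕ → ℕ := fun n => cond (X n) 1 0

/-- `evalO X c n`: the (possibly divergent) output of the oracle machine `c`
on input `n` with oracle `X`. -/
def evalO (X : Cantor) (c : CodeO) (n : ℕ) : Part ℕ := c.eval (oX X) n

/-- The oracle obtained by writing the string `ρ` before the bits of `X`. -/
def prepend (ρ : List Bool) (X : Cantor) : Cantor := fun n =>
  if n < ρ.length then ρ.getD n false else X (n - ρ.length)

/-- `X ∈ 2^ω` extends the finite string `ρ`. -/
def Extends (X : Cantor) (ρ : List Bool) : Prop := initSeg X ρ.length = ρ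

/-- `u` is a universal oracle machine: some effective, prefix-free translation
`c ↦ σ_c` satisfies `u(σ_c * X, n) ≃ c(X, n)` for all machines `c`. -/
def UniversalOM (u : CodeO) : Prop :=
  ∃ σ : CodeO → List Bool,
    (∃ f : ℕ → ℕ, Computable f ∧ ∀ c : CodeO, f c.encode = Encodable.encode (σ c)) ∧
    IsPrefixFree (Set.range σ) ∧
    ∀ (c : CodeO) (X : Cantor) (n : ℕ), evalO (prepend (σ c) X) u n = evalO X c n

/-- `TOT(c)`: the oracles `X` such that the function `c(X)` is total. -/
def TOT (c : CodeO) : Set Cantor := {X | ∀ n, (evalO X c n).Dom}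

/-- The domain of the partial function `c(X)`. -/
def domSet (c : CodeO) (X : Cantor) : Set ℕ := {n | (evalO X c n).Dom}

/-- The range of the partial function `c(X)`. -/
def ranSet (c : CodeO) (X : Cantor) : Set ℕ := {v | ∃ n, v ∈ evalO X c n}

/-- `INF(c)`: the oracles `X` such that `c(X)` has infinite domain. -/
def INF (c : CodeO) : Set Cantor := {X | (domSet c X).Infinite}

/-- `COF(c)`: the oracles `X` such that `c(X)` has cofinite domain. -/
def COF (c : CodeO) : Set Cantor := {X | (domSet c X)ᶜ.Finite}

/-- `COM(c)`: the oracles `X` such that `c(X)` has computable domain. -/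
def COM (c : CodeO) : Set Cantor := {X | ComputablePred fun n => n ∈ domSet c X}

/-- The characteristic function of a set of naturals. -/
noncomputable def chi (A : Set ℕ) : ℕ → ℕ := fun n => if n ∈ A then 1 else 0

/-- Turing reducibility between sets of naturals. -/
def TuringLEs (B A : Set ℕ) : Prop := ∃ c : CodeO, ∀ n, c.eval (chi A) n = Part.some (chi B n)

/-- The halting problem `∅'` as a set of naturals. -/
noncomputable def HaltingSet : Set ℕ := {e | iterJump 1 e = 1}

/-- `COMPL(c)`: the oracles `X` such that the domain of `c(X)` computes the halting problem. -/
noncomputable def COMPL (c : CodeO) : Set Cantor := {X | TuringLEs HaltingSet (domSet c X)}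

/-- Turing reducibility between total functions on ℕ. -/
def TuringLEf (f g : ℕ → ℕ) : Prop := ∃ c : CodeO, ∀ n, c.eval g n = Part.some (f n)

/-- A real number viewed as an oracle, via its binary expansion. -/
noncomputable def realOracle (α : ℝ) : ℕ → ℕ := oX (digits α)

/-- Two reals have Turing-incomparable degrees. -/
noncomputable def TIncompReal (α β : ℝ) : Prop :=
  ¬ TuringLEf (realOracle α) (realOracle β) ∧ ¬ TuringLEf (realOracle β) (realOracle α)

/-! ### Arithmetical hierarchy -/

/-- Evaluation with the trivial (empty) oracle: ordinary partial recursion. -/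
def eval0 (c : CodeO) : ℕ →. ℕ := c.eval fun _ => 0

/-- `SigmaNumIdx n c` is the `Σ^0_{n+1}` subset of `ℕ` with index `c`. -/
def SigmaNumIdx : ℕ → CodeO → Set ℕ
  | 0, c => {m | (eval0 c m).Dom}
  | n + 1, c => {m | ∃ k, Nat.pair m k ∉ SigmaNumIdx n c}

/-- `S ⊆ ℕ` is `Σ^0_n` (intended for `n ≥ 1`). -/
def SigmaN (n : ℕ) (S : Set ℕ) : Prop := ∃ c : CodeO, S = SigmaNumIdx (n - 1) c

/-- The set of codes of the elements of a set of binary strings. -/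
def strCodes (S : Set (List Bool)) : Set ℕ := {m | ∃ σ ∈ S, Encodable.encode σ = m}

/-- A set of binary strings is `Σ^0_n`. -/
def SigmaStr (n : ℕ) (S : Set (List Bool)) : Prop := SigmaN n (strCodes S)

/-- A set of binary strings is `Π^0_n`: its complement is `Σ^0_n`. -/
def PiStr (n : ℕ) (S : Set (List Bool)) : Prop := SigmaStr n Sᶜ

/-- A set of binary strings is c.e. relative to the oracle `O`. -/
def CeStrIn (O : ℕ → ℕ) (S : Set (List Bool)) : Prop := CeIn O (strCodes S)

/-- `SigmaClassIdx n c m` is the `Σ^0_{n+1}` class of elements of Cantor space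
with index `c` and parameter `m`. -/
def SigmaClassIdx : ℕ → CodeO → ℕ → Set Cantor
  | 0, c, m => {X | (evalO X c m).Dom}
  | n + 1, c, m => {X | ∃ k, X ∉ SigmaClassIdx n c (Nat.pair m k)}

/-! ### Monotone machines -/

/-- A monotone machine: a partial computable, monotone map on finite binary strings. -/
structure MonoMachine where
  f : List Bool →. List Bool
  partrec : Partrec f
  mono : ∀ ⦃σ τ a b : List Bool⦄, σ <+: τ → a ∈ f σ → b ∈ f τ → a <+: b

/-- The oracles `X` such that the output of the monotone machine on `X` is infinite. -/
def MonoINF (M : MonoMachine) : Set Cantor :=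
  {X | ∀ k, ∃ n a, a ∈ M.f (initSeg X n) ∧ k ≤ a.length}

/-- The `k`-th bit of the output `M(X)` of a monotone machine is `b`. -/
def MonoMachine.hasBit (M : MonoMachine) (X : Cantor) (k : ℕ) (b : Bool) : Prop :=
  ∃ n a, a ∈ M.f (initSeg X n) ∧ a[k]? = some b

/-- `U` is a universal monotone machine. -/
def UniversalMono (U : MonoMachine) : Prop :=
  ∃ (M : ℕ → MonoMachine) (σ : ℕ → List Bool),
    Partrec₂ (fun (e : ℕ) (τ : List Bool) => (M e).f τ) ∧
    (∀ V : MonoMachine, ∃ e, (M e).f = V.f) ∧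
    Computable σ ∧ IsPrefixFree (Set.range σ) ∧
    ∀ e τ, U.f (σ e ++ τ) = (M e).f τ

/-! ### Infinitary self-delimiting machines -/

/-- Chaitin's infinitary self-delimiting machines: `f σ n` is the `n`-th approximation
of the output on program `σ` (`none` meaning divergence); the convergence relation is
decidable, approximations are monotone, and machines are self-delimiting. -/
structure InfMachine where
  f : List Bool → ℕ → Option (List Bool)
  computable : Computable₂ f
  mono : ∀ σ m n a, n < m → f σ m = some a → ∃ b, f σ n = some b ∧ b <+: a
  sd : ∀ σ τ n a, f σ n = some a → f (σ ++ τ) n = some a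

/-- `M^∞(σ)↓`: all approximations converge. -/
def InfMachine.domInf (M : InfMachine) (σ : List Bool) : Prop := ∀ n, M.f σ n ≠ none

/-- The domain of `M^∞`. -/
def InfMachine.DOM (M : InfMachine) : Set (List Bool) := {σ | M.domInf σ}

/-- The output `M^∞(σ)` is infinite (a stream). -/
def InfMachine.outInf (M : InfMachine) (σ : List Bool) : Prop :=
  ∀ k, ∃ n a, M.f σ n = some a ∧ k ≤ a.length

/-- `FIN(M^∞)`: programs in the domain with finite output. -/
def InfMachine.FIN (M : InfMachine) : Set (List Bool) := {σ | M.domInf σ ∧ ¬ M.outInf σ}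

/-- `INF(M^∞)`: programs in the domain with infinite output. -/
def InfMachine.INF (M : InfMachine) : Set (List Bool) := {σ | M.domInf σ ∧ M.outInf σ}

/-- The `k`-th bit of the output `M^∞(σ)` is `b`. -/
def InfMachine.hasBit (M : InfMachine) (σ : List Bool) (k : ℕ) (b : Bool) : Prop :=
  ∃ n a, M.f σ n = some a ∧ a[k]? = some b

/-- The domain of the prefix-free machine `M^*`: minimal strings in the domain of `M^∞`. -/
def InfMachine.DOMstar (M : InfMachine) : Set (List Bool) :=
  {σ | M.domInf σ ∧ ∀ τ, τ <+: σ → τ ≠ σ → ¬ M.domInf τ}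

/-- Programs whose output is a stream with a tail of 1s. -/
def InfMachine.COFout (M : InfMachine) : Set (List Bool) :=
  {σ | M.domInf σ ∧ M.outInf σ ∧ ∃ t, ∀ k, t ≤ k → M.hasBit σ k true}

/-- `A^∞(σ) ≃ B^∞(τ)`: both converge or both diverge, with equal outputs. -/
def InfAgree (A : InfMachine) (σ : List Bool) (B : InfMachine) (τ : List Bool) : Prop :=
  (A.domInf σ ↔ B.domInf τ) ∧ (A.domInf σ → ∀ k b, (A.hasBit σ k b ↔ B.hasBit τ k b))

/-- `U` is a universal infinitary self-delimiting machine. -/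
def UniversalInf (U : InfMachine) : Prop :=
  ∃ (M : ℕ → InfMachine) (σ : ℕ → List Bool),
    Computable (fun p : ℕ × List Bool × ℕ => (M p.1).f p.2.1 p.2.2) ∧
    (∀ V : InfMachine, ∃ e, ∀ τ, InfAgree (M e) τ V τ) ∧
    Computable σ ∧ IsPrefixFree (Set.range σ) ∧
    ∀ e τ, InfAgree U (σ e ++ τ) (M e) τ

end RandProb

/-!
Write `U = {σ | ∃ k, c⟨σ, k⟩↑}` with `c` partial recursive. The machine stays silent and
converges at stage `n` on `τ` as long as some pair `(τ↾i, k)` with `i, k ≤ |τ|` has not halted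
within `n` steps; this is decidable, monotone in `n` and preserved under extension. If `τ`
passes every stage, one of these finitely many computations never halts, so a prefix of `τ`,
hence `τ`, lies in `U`. Conversely a true witness `k` for `σ ∈ U` keeps every extension of `σ`
of length at least `max |σ| k` in the domain.
-/

namespace RandProb

open Nat.Partrec (Code)
open Nat.Partrec.Code
open Filter Encodable

def CodeO.toCode : CodeO → Code
  | .zero => .zero
  | .succ => .succ
  | .left => .left
  | .right => .right
  | .oracle => .zero
  | .pair a b => .pair a.toCode b.toCode
  | .comp a b => .comp a.toCode b.toCode
  | .prec a b => .prec a.toCode b.toCode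
  | .rfind' a => .rfind' a.toCode

theorem eval0_eq_eval_toCode (c : CodeO) : eval0 c = c.toCode.eval := by
  induction c <;> simp_all [eval0, CodeO.eval, Nat.Partrec.Code.eval, CodeO.toCode]
  all_goals rfl

theorem encode_mem_strCodes {S : Set (List Bool)} {σ : List Bool} :
    encode σ ∈ strCodes S ↔ σ ∈ S :=
  ⟨fun ⟨_, hσ', he⟩ => encode_injective he ▸ hσ', fun hσ => ⟨σ, hσ, rfl⟩⟩

theorem SigmaStr.exists_code {U : Set (List Bool)} (hU : SigmaStr 2 U) :
    ∃ c : Code, ∀ σ, σ ∈ U ↔ ∃ k, ¬(c.eval (Nat.pair (encode σ) k)).Dom := by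
  obtain ⟨c, hc⟩ := hU
  refine ⟨c.toCode, fun σ => ?_⟩
  rw [← encode_mem_strCodes, hc, ← eval0_eq_eval_toCode]
  rfl

theorem evaln_eq_none_of_not_dom {c : Code} {m : ℕ} (h : ¬(c.eval m).Dom) (n : ℕ) :
    evaln n c m = none :=
  Option.eq_none_iff_forall_not_mem.2 fun _ hx => h (Part.dom_iff_mem.2 ⟨_, evaln_sound hx⟩)

theorem eventually_evaln_ne_none {c : Code} {m : ℕ} (h : (c.eval m).Dom) :
    ∀ᶠ n in atTop, evaln n c m ≠ none := by
  obtain ⟨k, hk⟩ := evaln_complete.1 (Part.get_mem h)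
  filter_upwards [eventually_ge_atTop k] with n hn
  exact Option.ne_none_iff_exists'.2 ⟨_, evaln_mono hn hk⟩

namespace InfMachine

variable (p : List Bool → ℕ → Prop) [DecidableRel p]

def ofStages (hp : PrimrecRel p) (anti : ∀ σ, Antitone (p σ))
    (append : ∀ σ τ n, p σ n → p (σ ++ τ) n) : InfMachine where
  f σ n := if p σ n then some [] else none
  computable := (Primrec.ite hp (Primrec.const _) (Primrec.const _)).to_comp
  mono σ m n a hnm ha := by
    have hm : p σ m := by by_contra h; simp [h] at ha
    exact ⟨[], by simp [anti σ hnm.le hm], by simp_all⟩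
  sd σ τ n a ha := by
    have hn : p σ n := by by_contra h; simp [h] at ha
    simpa [hn, append σ τ n hn] using ha

variable {p} {hp : PrimrecRel p} {anti : ∀ σ, Antitone (p σ)}
  {append : ∀ σ τ n, p σ n → p (σ ++ τ) n}

theorem ofStages_output {σ : List Bool} {n : ℕ} {a : List Bool}
    (h : (ofStages p hp anti append).f σ n = some a) : a = [] := by
  by_cases hσ : p σ n <;> simp_all [ofStages]

theorem domInf_ofStages {σ : List Bool} :
    (ofStages p hp anti append).domInf σ ↔ ∀ n, p σ n := by
  simp [domInf, ofStages]

theorem INF_ofStages : (ofStages p hp anti append).INF = ∅ := by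
  refine Set.eq_empty_of_forall_notMem fun σ ⟨_, hout⟩ => ?_
  obtain ⟨n, a, ha, hlen⟩ := hout 1
  simp [ofStages_output ha] at hlen

end InfMachine

@[simp]
theorem length_initSeg (X : Cantor) (n : ℕ) : (initSeg X n).length = n := by
  simp [initSeg]

theorem initSeg_prefix (X : Cantor) {m n : ℕ} (h : m ≤ n) : initSeg X m <+: initSeg X n := by
  rw [initSeg, initSeg, ← Nat.min_eq_left h, ← List.take_range, List.map_take]
  exact List.take_prefix _ _

theorem cyl_eq_of_subset {S T : Set (List Bool)} (hST : S ⊆ T)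
    (hT : ∀ σ ∈ T, ∃ n, σ.length ≤ n ∧ ∀ τ : List Bool, σ <+: τ → τ.length = n → τ ∈ S) :
    cyl S = cyl T := by
  refine (Set.Subset.antisymm (fun X ⟨n, hn⟩ => ⟨n, hST hn⟩) fun X ⟨m, hm⟩ => ?_)
  obtain ⟨n, hmn, hn⟩ := hT _ hm
  rw [length_initSeg] at hmn
  exact ⟨n, hn _ (initSeg_prefix X hmn) (length_initSeg X n)⟩

def SigmaTwoStage (c : Code) (τ : List Bool) (n : ℕ) : Prop :=
  ∃ i ≤ τ.length, ∃ k ≤ τ.length, evaln n c (Nat.pair (encode (τ.take i)) k) = none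

instance (c : Code) : DecidableRel (SigmaTwoStage c) := fun τ n => by
  unfold SigmaTwoStage; infer_instance

theorem primrecRel_sigmaTwoStage (c : Code) : PrimrecRel (SigmaTwoStage c) := by
  have hwit : PrimrecRel fun (k : ℕ) (a : (List Bool × ℕ) × ℕ) =>
      evaln a.1.2 c (Nat.pair (encode (a.1.1.take a.2)) k) = none := by
    have htake : Primrec fun p : ℕ × (List Bool × ℕ) × ℕ => p.2.1.1.take p.2.2 :=
      Primrec.list_take.comp (Primrec.snd.comp Primrec.snd)
        (Primrec.fst.comp (Primrec.fst.comp Primrec.snd))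
    exact Primrec.eq.comp (primrec_evaln.comp (((Primrec.snd.comp (Primrec.fst.comp
      Primrec.snd)).pair (Primrec.const c)).pair (Primrec₂.natPair.comp
        (Primrec.encode.comp htake) Primrec.fst))) (Primrec.const none)
  have hprefix : PrimrecRel fun (i : ℕ) (a : List Bool × ℕ) =>
      ∃ k ∈ List.range (a.1.length + 1), evaln a.2 c (Nat.pair (encode (a.1.take i)) k) = none :=
    hwit.exists_mem_list.comp (Primrec.list_range.comp (Primrec.succ.comp
      (Primrec.list_length.comp (Primrec.fst.comp Primrec.snd)))) (Primrec.snd.pair Primrec.fst)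
  refine (hprefix.exists_mem_list.comp (Primrec.list_range.comp (Primrec.succ.comp
    (Primrec.list_length.comp Primrec.fst))) Primrec.id).of_eq fun a => ?_
  simp [SigmaTwoStage]

theorem sigmaTwoStage_antitone (c : Code) (τ : List Bool) : Antitone (SigmaTwoStage c τ) := by
  rintro n m hnm ⟨i, hi, k, hk, hnone⟩
  refine ⟨i, hi, k, hk, Option.eq_none_iff_forall_not_mem.2 fun x hx => ?_⟩
  simpa [hnone] using evaln_mono hnm hx

theorem SigmaTwoStage.append {c : Code} {σ : List Bool} {n : ℕ} (h : SigmaTwoStage c σ n)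
    (τ : List Bool) : SigmaTwoStage c (σ ++ τ) n := by
  obtain ⟨i, hi, k, hk, hnone⟩ := h
  have hlen : σ.length ≤ (σ ++ τ).length := by simp
  exact ⟨i, hi.trans hlen, k, hk.trans hlen, by rwa [List.take_append_of_le_length hi]⟩

theorem sigmaTwoStage_of_prefix {c : Code} {σ τ : List Bool} {k : ℕ}
    (hk : ¬(c.eval (Nat.pair (encode σ) k)).Dom) (hστ : σ <+: τ) (hkτ : k ≤ τ.length) (n : ℕ) :
    SigmaTwoStage c τ n :=
  ⟨σ.length, hστ.length_le, k, hkτ, by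
    rw [← List.prefix_iff_eq_take.1 hστ]; exact evaln_eq_none_of_not_dom hk n⟩

theorem mem_of_forall_sigmaTwoStage {U : Set (List Bool)} (hup : UpClosed U) {c : Code}
    (hc : ∀ σ, σ ∈ U ↔ ∃ k, ¬(c.eval (Nat.pair (encode σ) k)).Dom) {τ : List Bool}
    (hτ : ∀ n, SigmaTwoStage c τ n) : τ ∈ U := by
  by_contra hτU
  have hhalts : ∀ i ∈ Set.Iic τ.length, ∀ k ∈ Set.Iic τ.length,
      (c.eval (Nat.pair (encode (τ.take i)) k)).Dom := fun i hi k _ => by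
    by_contra hk
    exact hτU (hup _ ((hc _).2 ⟨k, hk⟩) τ (List.take_prefix i τ))
  have hfinite := Set.finite_Iic τ.length
  obtain ⟨n, hn⟩ := ((eventually_all_finite hfinite).2 fun i hi =>
    (eventually_all_finite hfinite).2 fun k hk => eventually_evaln_ne_none (hhalts i hi k hk)).exists
  obtain ⟨i, hi, k, hk, hnone⟩ := hτ n
  exact hn i hi k hk hnone

def sigmaTwoMachine (c : Code) : InfMachine :=
  InfMachine.ofStages (SigmaTwoStage c) (primrecRel_sigmaTwoStage c) (sigmaTwoStage_antitone c)
    fun _ τ _ h => h.append τ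

/-- **From a `Σ^0_2` set of strings to an infinitary self-delimiting machine.**
Given an upward closed `Σ^0_2` set `U` of strings there is an infinitary self-delimiting
machine `M` which never prints anything such that: (i) if `σ ∈ U` then for some
`n ≥ |σ|` every extension of `σ` of length `n` is in `DOM(M^∞)`; (ii) every
`σ ∈ DOM(M^∞)` is in `U`.  Consequently `⟦DOM(M^∞)⟧ = ⟦U⟧` and `INF(M^∞) = ∅`. -/
theorem sigma2_to_infinitary_machine (U : Set (List Bool)) (hU : SigmaStr 2 U)
    (hup : UpClosed U) :
    ∃ M : InfMachine,
      (∀ σ n a, M.f σ n = some a → a = []) ∧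
      (∀ σ ∈ U, ∃ n, σ.length ≤ n ∧
        ∀ τ : List Bool, σ <+: τ → τ.length = n → τ ∈ M.DOM) ∧
      (∀ σ ∈ M.DOM, σ ∈ U) ∧
      cyl M.DOM = cyl U ∧ M.INF = ∅ := by
  obtain ⟨c, hc⟩ := hU.exists_code
  have hdense : ∀ σ ∈ U, ∃ n, σ.length ≤ n ∧
      ∀ τ : List Bool, σ <+: τ → τ.length = n → τ ∈ (sigmaTwoMachine c).DOM := by
    intro σ hσ
    obtain ⟨k, hk⟩ := (hc σ).1 hσ
    refine ⟨max σ.length k, le_max_left _ _, fun τ hστ hτ => ?_⟩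
    exact InfMachine.domInf_ofStages.2 (sigmaTwoStage_of_prefix hk hστ (hτ ▸ le_max_right _ _))
  have hsound : (sigmaTwoMachine c).DOM ⊆ U := fun τ hτ =>
    mem_of_forall_sigmaTwoStage hup hc (InfMachine.domInf_ofStages.1 hτ)
  exact ⟨sigmaTwoMachine c, fun _ _ _ => InfMachine.ofStages_output, hdense, hsound,
    cyl_eq_of_subset hsound hdense, InfMachine.INF_ofStages⟩

end RandProb
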